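/- arXiv:2205.15695 — 2 statements merged into one kernel-verified Lean document; each statement's English description precedes it below -/
import Mathlib

section
/- Let K ≥ 1 and n ≥ 1, and let 0 < λ_1 ≤ λ_2 ≤ … ≤ λ_K. For each type k let P_1^k, …, P_n^k be mutually independent random variables, with P_i^k exponentially distributed with mean λ_k. Let C_FTPP = Σ_{a=1}^N Σ_{b=1}^a P_b where P_1, …, P_N (N = nK) lists all jobs in nondecreasing order of their means, and let C_RR = Σ_j P_j + 2·Σ_{1≤i<j≤N} min(P_i, P_j). Then E[C_FTPP] ≤ E[C_RR]. -/
open MeasureTheory ProbabilityTheory Finset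

/-!
Summing over the later jobs, `C_FTPP = Σ_j P_j + Σ_{i<j} P_i`, while
`C_RR = Σ_j P_j + Σ_{i<j} 2 min(P_i, P_j)`, so it suffices to compare the pairwise terms in
expectation. The minimum of independent exponentials with rates `r, s` is exponential with rate
`r + s`, hence `2 E[min(P_i, P_j)] = 2 λ_i λ_j / (λ_i + λ_j) ≥ λ_i = E[P_i]`
whenever `λ_i ≤ λ_j`.
-/

theorem Finset.sum_sum_Iic_eq_sum_add_sum_sum_Ioi {ι M : Type*} [Fintype ι] [PartialOrder ι]
    [LocallyFiniteOrderBot ι] [LocallyFiniteOrderTop ι] [AddCommMonoid M] (f : ι → M) :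
    ∑ a, ∑ b ∈ Iic a, f b = ∑ b, f b + ∑ i, ∑ _j ∈ Ioi i, f i := by
  rw [sum_comm' (t' := univ) (s' := Ici) (by simp), ← sum_add_distrib]
  exact sum_congr rfl fun b _ => by rw [Ici_eq_cons_Ioi, sum_cons]

namespace ProbabilityTheory

variable {r s : ℝ}

lemma expMeasure_Ioi (hr : 0 < r) (t : ℝ) :
    expMeasure r (Set.Ioi t) = ENNReal.ofReal (Real.exp (-r * max t 0)) := by
  have := isProbabilityMeasure_expMeasure hr
  rw [← Set.compl_Iic, prob_compl_eq_one_sub measurableSet_Iic, ← ofReal_cdf,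
    cdf_expMeasure_eq hr, ← ENNReal.ofReal_one,
    ← ENNReal.ofReal_sub _ (by split_ifs <;> simp [mul_nonneg hr.le, *])]
  split_ifs with ht
  · rw [max_eq_left ht]; ring_nf
  · rw [max_eq_right (not_le.1 ht).le]; simp

lemma ae_nonneg_expMeasure (hr : 0 < r) : ∀ᵐ x ∂expMeasure r, 0 ≤ x := by
  have := isProbabilityMeasure_expMeasure hr
  refine ae_iff.2 (measure_mono_null (fun x hx => Set.mem_Iic.2 (not_le.1 hx).le) ?_)
  rw [← ofReal_cdf, cdf_expMeasure_eq hr]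
  simp

lemma lintegral_ofReal_expMeasure (hr : 0 < r) :
    ∫⁻ x, ENNReal.ofReal x ∂expMeasure r = ENNReal.ofReal r⁻¹ := by
  have hneg : -r < 0 := neg_neg_of_pos hr
  calc ∫⁻ x, ENNReal.ofReal x ∂expMeasure r
      = ∫⁻ t in Set.Ioi 0, ENNReal.ofReal (Real.exp (-r * t)) := by
        rw [lintegral_eq_lintegral_meas_lt _ (ae_nonneg_expMeasure hr) aemeasurable_id]
        refine setLIntegral_congr_fun measurableSet_Ioi fun t ht => ?_
        rw [show {x | t < x} = Set.Ioi t from rfl, expMeasure_Ioi hr, max_eq_left (le_of_lt ht)]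
    _ = ENNReal.ofReal r⁻¹ := by
        rw [← ofReal_integral_eq_lintegral_ofReal (integrableOn_exp_mul_Ioi hneg 0)
          (Filter.Eventually.of_forall fun _ => (Real.exp_pos _).le),
          integral_exp_mul_Ioi hneg]
        simp [neg_div]

lemma integrable_id_expMeasure (hr : 0 < r) : Integrable id (expMeasure r) := by
  refine ⟨aestronglyMeasurable_id,
    (hasFiniteIntegral_iff_ofReal (ae_nonneg_expMeasure hr)).2 ?_⟩
  simp [lintegral_ofReal_expMeasure hr]

lemma integral_id_expMeasure (hr : 0 < r) : ∫ x, x ∂expMeasure r = r⁻¹ := by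
  rw [integral_eq_lintegral_of_nonneg_ae (ae_nonneg_expMeasure hr) aestronglyMeasurable_id]
  simp [lintegral_ofReal_expMeasure hr, (inv_pos.2 hr).le]

variable {Ω : Type*} [MeasurableSpace Ω] {P : Measure Ω} {X Y : Ω → ℝ}

lemma HasLaw.integrable_of_expMeasure (hr : 0 < r) (hX : HasLaw X (expMeasure r) P) :
    Integrable X P := by
  rw [← Function.id_comp X, ← integrable_map_measure _ hX.aemeasurable, hX.map_eq]
  · exact integrable_id_expMeasure hr
  · exact aestronglyMeasurable_id

lemma HasLaw.integral_of_expMeasure (hr : 0 < r) (hX : HasLaw X (expMeasure r) P) :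
    ∫ ω, X ω ∂P = r⁻¹ := by
  rw [hX.integral_eq, integral_id_expMeasure hr]

lemma IndepFun.hasLaw_min_expMeasure (hr : 0 < r) (hs : 0 < s)
    (hX : HasLaw X (expMeasure r) P) (hY : HasLaw Y (expMeasure s) P) (hXY : IndepFun X Y P) :
    HasLaw (fun ω => min (X ω) (Y ω)) (expMeasure (r + s)) P := by
  have : IsProbabilityMeasure (expMeasure r) := isProbabilityMeasure_expMeasure hr
  have : IsProbabilityMeasure (expMeasure (r + s)) :=
    isProbabilityMeasure_expMeasure (by positivity)
  have := hX.isProbabilityMeasure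
  have hmin : AEMeasurable (fun ω => min (X ω) (Y ω)) P := hX.aemeasurable.min hY.aemeasurable
  have htail : ∀ t, P.map (fun ω => min (X ω) (Y ω)) (Set.Ioi t) =
      expMeasure (r + s) (Set.Ioi t) := by
    intro t
    have hpre : (fun ω => min (X ω) (Y ω)) ⁻¹' Set.Ioi t =
        X ⁻¹' Set.Ioi t ∩ Y ⁻¹' Set.Ioi t := by
      ext ω; simp
    rw [Measure.map_apply_of_aemeasurable hmin measurableSet_Ioi, hpre,
      hXY.measure_inter_preimage_eq_mul _ _ measurableSet_Ioi measurableSet_Ioi,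
      ← Measure.map_apply_of_aemeasurable hX.aemeasurable measurableSet_Ioi,
      ← Measure.map_apply_of_aemeasurable hY.aemeasurable measurableSet_Ioi, hX.map_eq, hY.map_eq,
      expMeasure_Ioi hr, expMeasure_Ioi hs, expMeasure_Ioi (by positivity),
      ← ENNReal.ofReal_mul (Real.exp_pos _).le, ← Real.exp_add]
    ring_nf
  refine ⟨hmin, Measure.ext_of_Iic _ _ fun t => ?_⟩
  have := Measure.isProbabilityMeasure_map (μ := P) hmin
  rw [← Set.compl_Ioi, prob_compl_eq_one_sub measurableSet_Ioi,
    prob_compl_eq_one_sub measurableSet_Ioi, htail]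

lemma IndepFun.integral_le_two_mul_integral_min_of_expMeasure (hs : 0 < s) (hsr : s ≤ r)
    (hX : HasLaw X (expMeasure r) P) (hY : HasLaw Y (expMeasure s) P) (hXY : IndepFun X Y P) :
    ∫ ω, X ω ∂P ≤ 2 * ∫ ω, min (X ω) (Y ω) ∂P := by
  have hr : 0 < r := hs.trans_le hsr
  rw [hX.integral_of_expMeasure hr,
    (hXY.hasLaw_min_expMeasure hr hs hX hY).integral_of_expMeasure (by positivity),
    ← div_eq_mul_inv, le_div_iff₀ (by positivity), inv_mul_le_iff₀ hr]
  linarith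

end ProbabilityTheory

theorem stmt_3_general
    {Ω : Type*} [MeasurableSpace Ω] (μ : Measure Ω)
    (K n : ℕ)
    (lam : Fin K → ℝ) (hpos : ∀ k, 0 < lam k)
    (P : Fin K → Fin n → Ω → ℝ)
    (hmeas : ∀ k i, Measurable (P k i))
    (hdist : ∀ k i, Measure.map (P k i) μ = expMeasure (1 / lam k))
    (hindep : iIndepFun
      (fun p : Fin K × Fin n => P p.1 p.2) μ)
    (e : Fin (n * K) ≃ Fin K × Fin n)
    -- the enumeration lists the jobs in nondecreasing order of their means
    (he : ∀ a b : Fin (n * K), a ≤ b → lam (e a).1 ≤ lam (e b).1)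
    (CFTPP CRR : Ω → ℝ)
    (hCFTPP : ∀ ω, CFTPP ω =
      ∑ a : Fin (n * K), ∑ b ∈ Finset.Iic a, P (e b).1 (e b).2 ω)
    (hCRR : ∀ ω, CRR ω =
      (∑ j : Fin (n * K), P (e j).1 (e j).2 ω) +
      2 * ∑ i : Fin (n * K), ∑ j ∈ Finset.Ioi i,
        min (P (e i).1 (e i).2 ω) (P (e j).1 (e j).2 ω)) :
    ∫ ω, CFTPP ω ∂μ ≤ ∫ ω, CRR ω ∂μ := by
  set Q : Fin (n * K) → Ω → ℝ := fun j => P (e j).1 (e j).2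
  have hrate : ∀ j, 0 < 1 / lam (e j).1 := fun j => one_div_pos.2 (hpos _)
  have hlaw : ∀ j, HasLaw (Q j) (expMeasure (1 / lam (e j).1)) μ :=
    fun j => ⟨(hmeas _ _).aemeasurable, hdist _ _⟩
  have hint : ∀ j, Integrable (Q j) μ := fun j => (hlaw j).integrable_of_expMeasure (hrate j)
  have hF : ∫ ω, CFTPP ω ∂μ = ∑ a, ∑ b ∈ Iic a, ∫ ω, Q b ω ∂μ := by
    simp_rw [hCFTPP]
    rw [integral_finsetSum _ fun a _ => integrable_finsetSum _ fun b _ => hint b]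
    exact sum_congr rfl fun a _ => integral_finsetSum _ fun b _ => hint b
  have hR : ∫ ω, CRR ω ∂μ = ∑ j, ∫ ω, Q j ω ∂μ +
      ∑ i, ∑ j ∈ Ioi i, 2 * ∫ ω, min (Q i ω) (Q j ω) ∂μ := by
    have hmin : ∀ i j, Integrable (fun ω => min (Q i ω) (Q j ω)) μ :=
      fun i j => (hint i).inf (hint j)
    simp_rw [hCRR]
    rw [integral_add (integrable_finsetSum _ fun j _ => hint j)
      ((integrable_finsetSum _ fun i _ => integrable_finsetSum _ fun j _ => hmin i j).const_mul 2),
      integral_finsetSum _ fun j _ => hint j, integral_const_mul,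
      integral_finsetSum _ fun i _ => integrable_finsetSum _ fun j _ => hmin i j, mul_sum]
    congr 1
    refine sum_congr rfl fun i _ => ?_
    rw [integral_finsetSum _ fun j _ => hmin i j, mul_sum]
  rw [hF, hR, sum_sum_Iic_eq_sum_add_sum_sum_Ioi]
  gcongr with i _ j hj
  have hij : i < j := mem_Ioi.1 hj
  exact (hindep.indepFun (e.injective.ne hij.ne)).integral_le_two_mul_integral_min_of_expMeasure
    (hrate j) (one_div_le_one_div_of_le (hpos _) (he i j hij.le)) (hlaw i) (hlaw j)

/-- `E[C_FTPP] ≤ E[C_RR]` for `K` job types with `n` independent exponential jobs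
per type. -/
theorem stmt_3
    {Ω : Type*} [MeasurableSpace Ω] (μ : Measure Ω) [IsProbabilityMeasure μ]
    (K n : ℕ) (hK : 1 ≤ K) (hn : 1 ≤ n)
    (lam : Fin K → ℝ) (hpos : ∀ k, 0 < lam k) (hmono : Monotone lam)
    (P : Fin K → Fin n → Ω → ℝ)
    (hmeas : ∀ k i, Measurable (P k i))
    (hdist : ∀ k i, Measure.map (P k i) μ = expMeasure (1 / lam k))
    (hindep : iIndepFun
      (fun p : Fin K × Fin n => P p.1 p.2) μ)
    (e : Fin (n * K) ≃ Fin K × Fin n)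
    -- the enumeration lists the jobs in nondecreasing order of their means
    (he : ∀ a b : Fin (n * K), a ≤ b → lam (e a).1 ≤ lam (e b).1)
    (CFTPP CRR : Ω → ℝ)
    (hCFTPP : ∀ ω, CFTPP ω =
      ∑ a : Fin (n * K), ∑ b ∈ Finset.Iic a, P (e b).1 (e b).2 ω)
    (hCRR : ∀ ω, CRR ω =
      (∑ j : Fin (n * K), P (e j).1 (e j).2 ω) +
      2 * ∑ i : Fin (n * K), ∑ j ∈ Finset.Ioi i,
        min (P (e i).1 (e i).2 ω) (P (e j).1 (e j).2 ω)) :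
    ∫ ω, CFTPP ω ∂μ ≤ ∫ ω, CRR ω ∂μ :=
  stmt_3_general μ K n lam hpos P hmeas hdist hindep e he CFTPP CRR hCFTPP hCRR
end

section
/- Let H_K = Σ_{k=1}^K 1/k, B_K = Σ_{k=1}^K 1/k², and A_K = Σ_{k=1}^K Σ_{ℓ=1}^{k−1} 1/(k² + ℓ²). Then for every K ≥ 1, (π/4)·H_K − B_K ≤ A_K ≤ (π/4)·H_K. -/
/-!
Fix `k ≥ 1`. Since `x ↦ 1/(k² + x²)` is decreasing on `[0, ∞)` with antiderivative
`arctan (x/k) / k`, comparing the inner sum `∑_{l=1}^{k-1} 1/(k² + l²)` with integrals gives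
`(π/4 - arctan (1/k))/k ≤ ∑_{l=1}^{k-1} 1/(k² + l²) ≤ arctan ((k-1)/k)/k ≤ π/(4k)`,
and `arctan (1/k) ≤ 1/k` turns the lower bound into `π/(4k) - 1/k²`. Summing over `k` gives both
inequalities.
-/

open Finset Real

theorem Real.arctan_le_self {x : ℝ} (hx : 0 ≤ x) : arctan x ≤ x := by
  simpa only [tan_arctan] using le_tan (arctan_nonneg.2 hx) (arctan_lt_pi_div_two x)

theorem integral_one_div_sq_add_sq {c : ℝ} (hc : c ≠ 0) (a b : ℝ) :
    ∫ x in a..b, 1 / (c ^ 2 + x ^ 2) = (arctan (b / c) - arctan (a / c)) / c := by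
  have hrescale : ∀ x : ℝ, 1 / (c ^ 2 + x ^ 2) = (c ^ 2)⁻¹ * (1 / (1 + (x / c) ^ 2)) := by
    intro x
    field_simp
  simp_rw [hrescale, intervalIntegral.integral_const_mul,
    intervalIntegral.integral_comp_div (fun x => 1 / (1 + x ^ 2)) hc,
    integral_one_div_one_add_sq, smul_eq_mul]
  field_simp

theorem antitoneOn_one_div_sq_add_sq {c : ℝ} (hc : c ≠ 0) :
    AntitoneOn (fun x : ℝ => 1 / (c ^ 2 + x ^ 2)) (Set.Ici 0) := by
  intro a ha b _ hab
  dsimp only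
  gcongr

theorem sum_Icc_one_div_sq_add_sq_le {c : ℝ} (hc : c ≠ 0) (n : ℕ) :
    ∑ l ∈ Icc 1 n, 1 / (c ^ 2 + (l : ℝ) ^ 2) ≤ arctan (n / c) / c := by
  have h := AntitoneOn.sum_le_integral_Ico (Nat.zero_le n) <|
    (antitoneOn_one_div_sq_add_sq hc).mono fun x hx => le_trans (Nat.cast_nonneg 0) hx.1
  rw [integral_one_div_sq_add_sq hc, sum_Ico_add' (fun i : ℕ => 1 / (c ^ 2 + (i : ℝ) ^ 2)),
    Ico_add_one_right_eq_Icc] at h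
  simpa using h

theorem arctan_sub_div_le_sum_Icc_one_div_sq_add_sq {c : ℝ} (hc : c ≠ 0) (n : ℕ) :
    (arctan ((n + 1) / c) - arctan (1 / c)) / c ≤
      ∑ l ∈ Icc 1 n, 1 / (c ^ 2 + (l : ℝ) ^ 2) := by
  have h := AntitoneOn.integral_le_sum_Ico (Nat.le_add_left 1 n) <|
    (antitoneOn_one_div_sq_add_sq hc).mono fun x hx => le_trans (Nat.cast_nonneg 1) hx.1
  rw [integral_one_div_sq_add_sq hc, Ico_add_one_right_eq_Icc] at h
  simpa using h

theorem sum_Icc_one_div_sq_add_sq_le_pi_div_four_mul (k : ℕ) (hk : 0 < k) :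
    ∑ l ∈ Icc 1 (k - 1), (1 : ℝ) / ((k : ℝ) ^ 2 + (l : ℝ) ^ 2) ≤ π / 4 * (1 / k) := by
  have hc : (k : ℝ) ≠ 0 := by positivity
  calc ∑ l ∈ Icc 1 (k - 1), (1 : ℝ) / ((k : ℝ) ^ 2 + (l : ℝ) ^ 2)
      ≤ arctan ((k - 1 : ℕ) / k) / k := sum_Icc_one_div_sq_add_sq_le hc (k - 1)
    _ ≤ arctan 1 / k := by
        gcongr
        exact div_le_one_of_le₀ (by exact_mod_cast Nat.sub_le k 1) (Nat.cast_nonneg k)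
    _ = π / 4 * (1 / k) := by rw [arctan_one]; ring

theorem pi_div_four_mul_sub_le_sum_Icc_one_div_sq_add_sq (k : ℕ) (hk : 0 < k) :
    π / 4 * (1 / k) - 1 / (k : ℝ) ^ 2 ≤
      ∑ l ∈ Icc 1 (k - 1), (1 : ℝ) / ((k : ℝ) ^ 2 + (l : ℝ) ^ 2) := by
  have hc : (k : ℝ) ≠ 0 := by positivity
  calc π / 4 * (1 / k) - 1 / (k : ℝ) ^ 2
      = (arctan 1 - 1 / k) / k := by rw [arctan_one]; ring
    _ ≤ (arctan 1 - arctan (1 / k)) / k := by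
        gcongr
        exact arctan_le_self (by positivity)
    _ = (arctan (((k - 1 : ℕ) + 1) / k) - arctan (1 / k)) / k := by
        rw [Nat.cast_pred hk, sub_add_cancel, div_self hc]
    _ ≤ _ := arctan_sub_div_le_sum_Icc_one_div_sq_add_sq hc (k - 1)

theorem stmt_9_general (K : ℕ)
    (H B A : ℝ)
    (hH : H = ∑ k ∈ Finset.Icc 1 K, (1 : ℝ) / k)
    (hB : B = ∑ k ∈ Finset.Icc 1 K, (1 : ℝ) / (k : ℝ) ^ 2)
    (hA : A = ∑ k ∈ Finset.Icc 1 K, ∑ l ∈ Finset.Icc 1 (k - 1),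
      (1 : ℝ) / ((k : ℝ) ^ 2 + (l : ℝ) ^ 2)) :
    Real.pi / 4 * H - B ≤ A ∧ A ≤ Real.pi / 4 * H := by
  subst hH hB hA
  rw [mul_sum, ← sum_sub_distrib]
  exact ⟨sum_le_sum fun k hk =>
      pi_div_four_mul_sub_le_sum_Icc_one_div_sq_add_sq k (mem_Icc.1 hk).1,
    sum_le_sum fun k hk => sum_Icc_one_div_sq_add_sq_le_pi_div_four_mul k (mem_Icc.1 hk).1⟩

/-- `(π/4)·H_K − B_K ≤ A_K ≤ (π/4)·H_K` for every `K ≥ 1`. -/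
theorem stmt_9 (K : ℕ) (hK : 1 ≤ K)
    (H B A : ℝ)
    (hH : H = ∑ k ∈ Finset.Icc 1 K, (1 : ℝ) / k)
    (hB : B = ∑ k ∈ Finset.Icc 1 K, (1 : ℝ) / (k : ℝ) ^ 2)
    (hA : A = ∑ k ∈ Finset.Icc 1 K, ∑ l ∈ Finset.Icc 1 (k - 1),
      (1 : ℝ) / ((k : ℝ) ^ 2 + (l : ℝ) ^ 2)) :
    Real.pi / 4 * H - B ≤ A ∧ A ≤ Real.pi / 4 * H :=
  stmt_9_general K H B A hH hB hA
end
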